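/- Let C be a small ℂ-linear category, n ≥ 1, and ψ ∈ CN^n(C) with bψ ∈ C^{n+1}_λ(C) (i.e., (1−λ_{n+1})(bψ) = 0). Then Bψ ∈ Z^{n−1}_λ(C), i.e., b(Bψ) = 0 and (1−λ_{n−1})(Bψ) = 0. -/

import Mathlib

open CategoryTheory

noncomputable section

namespace CFM

universe v u

variable (C : Type u) [Category.{v} C]

/-- A composable chain of morphisms `(f⁰, f¹, …, fⁿ)` with `fⁱ : Xᵢ₊₁ ⟶ Xᵢ`;
`Chain C X Y` consists of chains with innermost source `X` and outermost target `Y`;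
`f⁰` is the outermost morphism. -/
inductive Chain : C → C → Type (max u v)
  | single : {X Y : C} → (X ⟶ Y) → Chain X Y
  | cons : {X Y Z : C} → (Y ⟶ Z) → Chain X Y → Chain X Z

namespace Chain

variable {C}

/-- Number of morphisms in the chain. -/
def size : {X Y : C} → Chain C X Y → ℕ
  | _, _, single _ => 1
  | _, _, cons _ c => c.size + 1

theorem one_le_size {X Y : C} (c : Chain C X Y) : 1 ≤ c.size := by
  induction c with
  | single f => simp [size]
  | cons f c ih => simp [size]

/-- Append a morphism at the inner end of a chain. -/
def snoc : {V X Y : C} → Chain C X Y → (V ⟶ X) → Chain C V Y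
  | _, _, _, single f, g => cons f (single g)
  | _, _, _, cons f c, g => cons f (snoc c g)

/-- Compose the morphisms in slots `i` and `i+1` of the chain (`fⁱ ∘ fⁱ⁺¹`). -/
def composeAt : {X Y : C} → ℕ → Chain C X Y → Chain C X Y
  | _, _, _, single f => single f
  | _, _, 0, cons f (single g) => single (g ≫ f)
  | _, _, 0, cons f (cons g c) => cons (g ≫ f) c
  | _, _, (i+1), cons f c => cons f (composeAt i c)

end Chain

/-- A cyclically composable tuple `(f⁰, …, fⁿ)`, i.e. an element of the cyclic nerve:
a chain from some object back to itself. -/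
def CycChain := Σ X : C, Chain C X X

/-- A function on the cyclic nerve of `C`; an element of `CN^n(C)` is (the multilinear
extension of) such a function, evaluated on tuples of size `n+1`. -/
def Cochain := CycChain C → ℂ

variable {C}

/-- The inverse cyclic rotation `(f⁰, …, fⁿ) ↦ (f¹, …, fⁿ, f⁰)`. -/
def rotInv : CycChain C → CycChain C
  | ⟨X, Chain.single f⟩ => ⟨X, Chain.single f⟩
  | ⟨_, Chain.cons f c⟩ => ⟨_, c.snoc f⟩

/-- The cyclic rotation `(f⁰, …, fⁿ) ↦ (fⁿ, f⁰, …, fⁿ⁻¹)`. -/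
def rot (t : CycChain C) : CycChain C := rotInv^[t.2.size - 1] t

/-- The (unsigned) cyclic operator: `(τφ)(f⁰⊗…⊗fⁿ) = φ(fⁿ⊗f⁰⊗…⊗fⁿ⁻¹)`. -/
def tauOp (φ : Cochain C) : Cochain C := fun t => φ (rot t)

/-- The signed cyclic operator `λₙ = (-1)ⁿ τₙ` on `CN^n(C)`. -/
def lamOp (n : ℕ) (φ : Cochain C) : Cochain C := fun t => (-1 : ℂ) ^ n * φ (rot t)

/-- The operator `A = 1 + λₙ + λₙ² + ⋯ + λₙⁿ` on `CN^n(C)`. -/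
def AOp (n : ℕ) (φ : Cochain C) : Cochain C :=
  fun t => ∑ k ∈ Finset.range (n + 1), (-1 : ℂ) ^ (n * k) * φ (rot^[k] t)

/-- The Hochschild coboundary `b : CN^n(C) → CN^{n+1}(C)`:
`(bφ)(f⁰⊗…⊗fⁿ⁺¹) = Σᵢ (-1)ⁱ φ(f⁰⊗…⊗fⁱfⁱ⁺¹⊗…⊗fⁿ⁺¹) + (-1)ⁿ⁺¹ φ(fⁿ⁺¹f⁰⊗f¹⊗…⊗fⁿ)`. -/
def bOp (n : ℕ) (φ : Cochain C) : Cochain C := fun t =>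
  (∑ i ∈ Finset.range (n + 1), (-1 : ℂ) ^ i * φ ⟨t.1, Chain.composeAt i t.2⟩) +
    (-1 : ℂ) ^ (n + 1) * φ ⟨(rot t).1, Chain.composeAt 0 (rot t).2⟩

/-- The truncated Hochschild coboundary `b'` (the last, cyclic, face omitted). -/
def b'Op (n : ℕ) (φ : Cochain C) : Cochain C := fun t =>
  ∑ i ∈ Finset.range (n + 1), (-1 : ℂ) ^ i * φ ⟨t.1, Chain.composeAt i t.2⟩

/-- The operator `B₀ : CN^{n+1}(C) → CN^n(C)`:
`(B₀φ)(f⁰⊗…⊗fⁿ) = φ(id⊗f⁰⊗…⊗fⁿ) - (-1)ⁿ⁺¹ φ(f⁰⊗…⊗fⁿ⊗id)`. -/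
def B0Op (n : ℕ) (φ : Cochain C) : Cochain C := fun t =>
  φ ⟨t.1, Chain.cons (𝟙 t.1) t.2⟩ - (-1 : ℂ) ^ (n + 1) * φ ⟨t.1, t.2.snoc (𝟙 t.1)⟩

/-- Connes' operator `B = A ∘ B₀ : CN^{n+1}(C) → CN^n(C)`. -/
def BOp (n : ℕ) (φ : Cochain C) : Cochain C := AOp n (B0Op n φ)


/-!
Let `b'` be the Hochschild coboundary without its cyclic face. Rotation permutes the faces
of a cyclic chain cyclically, which gives `b A = A b'`, and inserting identities gives
`b' B₀ + B₀ b = 1 - λ`. The two terms of `B₀ (bψ)` differ by a rotation, so `B₀ (bψ) = 0`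
when `bψ` is cyclic; then `b (Bψ) = A b' B₀ ψ = A (1 - λ) ψ = 0`, since `λₙ^{n+1} = 1` on
`CN^n` makes `A (1 - λ)` telescope. For the same reason `λ A = A`.
-/

namespace Chain

def append : {X Y Z : C} → Chain C Y Z → Chain C X Y → Chain C X Z
  | _, _, _, single f, d => cons f d
  | _, _, _, cons f c, d => cons f (append c d)

@[simp] theorem single_append {X Y Z : C} (f : Y ⟶ Z) (d : Chain C X Y) :
    append (single f) d = cons f d := by
  rw [append]

@[simp] theorem cons_append {W X Y Z : C} (f : Y ⟶ Z) (c : Chain C X Y) (d : Chain C W X) :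
    append (cons f c) d = cons f (append c d) := by
  rw [append]

theorem append_assoc {U W X Y : C} (c : Chain C X Y) (d : Chain C W X) (e : Chain C U W) :
    append (append c d) e = append c (append d e) := by
  induction c with
  | single f => simp
  | cons f c ih => simp [ih]

@[simp] theorem size_append {W X Y : C} (c : Chain C X Y) (d : Chain C W X) :
    (append c d).size = c.size + d.size := by
  induction c with
  | single f => simp [size, Nat.add_comm]
  | cons f c ih => simp only [cons_append, size, ih]; omega

theorem snoc_eq_append {V X Y : C} (c : Chain C X Y) (g : V ⟶ X) :
    c.snoc g = append c (single g) := by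
  induction c with
  | single f => simp [snoc]
  | cons f c ih => simp [snoc, ih]

theorem snoc_cons {V X Y Z : C} (f : Y ⟶ Z) (c : Chain C X Y) (g : V ⟶ X) :
    (cons f c).snoc g = cons f (c.snoc g) := by
  rw [snoc]

@[simp] theorem size_snoc {V X Y : C} (c : Chain C X Y) (g : V ⟶ X) :
    (c.snoc g).size = c.size + 1 := by
  simp [snoc_eq_append, size]

theorem exists_eq_snoc {X Y : C} (w : Chain C X Y) (h : 2 ≤ w.size) :
    ∃ (Z : C) (c : Chain C Z Y) (g : X ⟶ Z), w = c.snoc g := by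
  induction w with
  | single f => simp [size] at h
  | cons f c ih =>
    cases c with
    | single g => exact ⟨_, single f, g, by rw [snoc]⟩
    | cons g d =>
      obtain ⟨Z, c', g', hc⟩ := ih (by simp [size, d.one_le_size])
      exact ⟨Z, cons f c', g', by rw [hc, snoc_cons]⟩

@[simp] theorem composeAt_succ_cons {X Y Z : C} (i : ℕ) (f : Y ⟶ Z) (c : Chain C X Y) :
    composeAt (i + 1) (cons f c) = cons f (composeAt i c) := by
  rw [composeAt]

@[simp] theorem composeAt_zero_cons_cons {W X Y Z : C} (f : Y ⟶ Z) (g : W ⟶ Y)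
    (c : Chain C X W) : composeAt 0 (cons f (cons g c)) = cons (g ≫ f) c := by
  rw [composeAt]

@[simp] theorem composeAt_zero_cons_single {X Y Z : C} (f : Y ⟶ Z) (g : X ⟶ Y) :
    composeAt 0 (cons f (single g)) = single (g ≫ f) := by
  rw [composeAt]

@[simp] theorem composeAt_zero_cons_id {X Y : C} (c : Chain C X Y) :
    composeAt 0 (cons (𝟙 Y) c) = c := by
  cases c <;> simp

theorem composeAt_snoc {V X Y : C} (c : Chain C X Y) (g : V ⟶ X) {i : ℕ}
    (hi : i + 2 ≤ c.size) : composeAt i (c.snoc g) = (composeAt i c).snoc g := by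
  induction c generalizing i with
  | single f => simp [size] at hi
  | cons f c ih =>
    cases i with
    | zero =>
      cases c with
      | single h => simp [snoc]
      | cons h d => simp [snoc_cons]
    | succ i =>
      rw [size] at hi
      rw [snoc_cons, composeAt_succ_cons, composeAt_succ_cons, ih (by omega), snoc_cons]

theorem composeAt_size_snoc_snoc {U X W V : C} (c : Chain C W V) (h : X ⟶ W) (g : U ⟶ X) :
    composeAt c.size ((c.snoc h).snoc g) = c.snoc (g ≫ h) := by
  induction c with
  | single f => simp [size, snoc]
  | cons f c ih => simp [size, snoc_cons, ih]

theorem composeAt_snoc_id {X Y : C} (c : Chain C X Y) {k : ℕ} (hk : c.size = k + 1) :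
    composeAt k (c.snoc (𝟙 X)) = c := by
  induction c generalizing k with
  | single f =>
    obtain rfl : k = 0 := by simpa [size] using hk
    simp [snoc]
  | cons f c ih =>
    cases k with
    | zero => rw [size] at hk; have := c.one_le_size; omega
    | succ k => simp [snoc_cons, ih (by simpa [size] using hk)]

end Chain

open Chain

@[simp] theorem rotInv_cons {X Y : C} (f : Y ⟶ X) (c : Chain C X Y) :
    rotInv (⟨X, cons f c⟩ : CycChain C) = ⟨Y, c.snoc f⟩ := rfl

@[simp] theorem size_rotInv (t : CycChain C) : (rotInv t).2.size = t.2.size := by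
  obtain ⟨X, _ | ⟨f, c⟩⟩ := t
  · rfl
  · simp [size]

@[simp] theorem size_rotInv_iter (k : ℕ) (t : CycChain C) :
    (rotInv^[k] t).2.size = t.2.size := by
  induction k with
  | zero => rfl
  | succ k ih => rw [Function.iterate_succ_apply', size_rotInv, ih]

theorem rotInv_iter_size_append {X Y : C} (c : Chain C Y X) (d : Chain C X Y) :
    rotInv^[c.size] (⟨X, append c d⟩ : CycChain C) = ⟨Y, append d c⟩ := by
  induction c with
  | single f =>
    simp only [size, single_append, Function.iterate_one, rotInv_cons, snoc_eq_append]
    rfl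
  | cons f c ih =>
    erw [size, Function.iterate_succ_apply, cons_append, rotInv_cons, snoc_eq_append,
      append_assoc, ih, append_assoc, single_append]

theorem rotInv_iter_size (t : CycChain C) : rotInv^[t.2.size] t = t := by
  obtain ⟨X, _ | ⟨f, c⟩⟩ := t
  · simp only [size, Function.iterate_one]
    rfl
  · erw [size, Function.iterate_succ_apply, rotInv_cons, snoc_eq_append,
      rotInv_iter_size_append, single_append]

theorem rot_snoc {X Y : C} (c : Chain C X Y) (g : Y ⟶ X) :
    rot (⟨Y, c.snoc g⟩ : CycChain C) = ⟨X, cons g c⟩ := by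
  unfold rot
  rw [size_snoc, Nat.add_sub_cancel, snoc_eq_append, rotInv_iter_size_append,
    single_append]

theorem rot_single {X : C} (f : X ⟶ X) :
    rot (⟨X, single f⟩ : CycChain C) = ⟨X, single f⟩ := by
  unfold rot
  simp only [size, tsub_self, Function.iterate_zero]
  rfl

theorem leftInverse_rot_rotInv : Function.LeftInverse (rot (C := C)) rotInv := by
  rintro ⟨X, _ | ⟨f, c⟩⟩
  · exact rot_single _
  · exact rot_snoc c f

@[simp] theorem size_rot (t : CycChain C) : (rot t).2.size = t.2.size :=
  size_rotInv_iter _ t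

@[simp] theorem size_rot_iter (k : ℕ) (t : CycChain C) : (rot^[k] t).2.size = t.2.size := by
  induction k with
  | zero => rfl
  | succ k ih => rw [Function.iterate_succ_apply', size_rot, ih]

theorem rot_iter_size (t : CycChain C) : rot^[t.2.size] t = t := by
  have h := leftInverse_rot_rotInv.iterate t.2.size t
  rwa [rotInv_iter_size] at h

def delta (j : ℕ) (t : CycChain C) : CycChain C := ⟨t.1, t.2.composeAt j⟩

@[simp] theorem delta_mk (j : ℕ) {X : C} (w : Chain C X X) :
    delta j (⟨X, w⟩ : CycChain C) = ⟨X, w.composeAt j⟩ := rfl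

def cyc (t : CycChain C) : CycChain C := delta 0 (rot t)

theorem bOp_apply (n : ℕ) (φ : Cochain C) (t : CycChain C) :
    bOp n φ t =
      ∑ i ∈ Finset.range (n + 1), (-1) ^ i * φ (delta i t) + (-1) ^ (n + 1) * φ (cyc t) :=
  rfl

theorem b'Op_apply (n : ℕ) (φ : Cochain C) (t : CycChain C) :
    b'Op n φ t = ∑ i ∈ Finset.range (n + 1), (-1) ^ i * φ (delta i t) := rfl

/-- The faces of a cyclic chain of length `N` are indexed by `i < N`; the last one is `cyc`. -/
def face (i : ℕ) (t : CycChain C) : CycChain C := if i + 1 = t.2.size then cyc t else delta i t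

theorem face_eq_delta {i : ℕ} {t : CycChain C} (h : i + 1 ≠ t.2.size) : face i t = delta i t :=
  if_neg h

theorem delta_succ_rot (t : CycChain C) {j : ℕ} (hj : j + 3 ≤ t.2.size) :
    delta (j + 1) (rot t) = rot (delta j t) := by
  obtain ⟨V, w⟩ := t
  dsimp only at hj
  obtain ⟨Z, c, g, rfl⟩ := w.exists_eq_snoc (by omega)
  rw [size_snoc] at hj
  rw [rot_snoc, delta_mk, delta_mk, composeAt_succ_cons, composeAt_snoc c g (by omega), rot_snoc]

theorem cyc_rot (t : CycChain C) (h : 2 ≤ t.2.size) :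
    cyc (rot t) = rot (delta (t.2.size - 2) t) := by
  obtain ⟨V, w⟩ := t
  obtain ⟨Z, c, g, rfl⟩ := w.exists_eq_snoc h
  cases c with
  | single f =>
    have e : cons g (single f) = (single g).snoc f := by rw [snoc]
    rw [cyc, rot_snoc, e, rot_snoc, delta_mk, delta_mk]
    simp only [snoc, size, composeAt_zero_cons_single, Nat.reduceAdd, tsub_self, rot_single]
    rfl
  | cons f d =>
    obtain ⟨W, c', h', hc⟩ := (cons f d).exists_eq_snoc (by simp [size, d.one_le_size])
    rw [hc, cyc, rot_snoc, ← snoc_cons, rot_snoc, delta_mk, delta_mk, size_snoc, size_snoc,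
      show c'.size + 1 + 1 - 2 = c'.size by omega, composeAt_zero_cons_cons,
      composeAt_size_snoc_snoc, rot_snoc]

theorem face_succ_rot (t : CycChain C) {i : ℕ} (hi : i + 2 ≤ t.2.size) :
    face (i + 1) (rot t) = rot (face i t) := by
  unfold face
  rw [size_rot]
  by_cases hlast : i + 2 = t.2.size
  · rw [if_pos hlast, if_neg (by omega), cyc_rot t (by omega), ← hlast, Nat.add_sub_cancel]
  · rw [if_neg hlast, if_neg (by omega), delta_succ_rot t (by omega)]

theorem face_zero_rot (t : CycChain C) (h : 2 ≤ t.2.size) :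
    face 0 (rot t) = face (t.2.size - 1) t := by
  unfold face
  rw [size_rot, if_neg (by omega), if_pos (by omega), cyc]

theorem face_add_rot_iter (t : CycChain C) {i k : ℕ} (h : i + k < t.2.size) :
    face (i + k) (rot^[k] t) = rot^[k] (face i t) := by
  induction k with
  | zero => rfl
  | succ k ih =>
    rw [Function.iterate_succ_apply', ← Nat.add_assoc,
      face_succ_rot _ (by rw [size_rot_iter]; omega), ih (by omega),
      Function.iterate_succ_apply']

theorem face_rot_iter_of_lt (t : CycChain C) {i k : ℕ} (hik : i < k) (hk : k < t.2.size) :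
    face i (rot^[k] t) = rot^[k - 1] (face (t.2.size + i - k) t) := by
  obtain ⟨l, rfl⟩ := Nat.exists_eq_add_of_lt hik
  have hsize : (rot (rot^[l] t)).2.size = t.2.size := by rw [size_rot, size_rot_iter]
  calc face i (rot^[i + l + 1] t)
      = face (0 + i) (rot^[i] (rot (rot^[l] t))) := by
        rw [Nat.zero_add, ← Function.iterate_succ_apply' rot l, ← Function.iterate_add_apply]
        rfl
    _ = rot^[i] (face 0 (rot (rot^[l] t))) := face_add_rot_iter _ (by omega)
    _ = rot^[i] (face (t.2.size + i - (i + l + 1) + l) (rot^[l] t)) := by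
        rw [face_zero_rot _ (by rw [size_rot_iter]; omega), size_rot_iter]
        congr 2
        omega
    _ = rot^[i + l + 1 - 1] (face (t.2.size + i - (i + l + 1)) t) := by
        rw [face_add_rot_iter t (by omega), Nat.add_sub_cancel, Function.iterate_add_apply]

theorem bOp_eq_sum_face (n : ℕ) (φ : Cochain C) {t : CycChain C} (ht : t.2.size = n + 2) :
    bOp n φ t = ∑ i ∈ Finset.range (n + 2), (-1 : ℂ) ^ i * φ (face i t) := by
  rw [bOp_apply, Finset.sum_range_succ _ (n + 1),
    show face (n + 1) t = cyc t from if_pos (by omega)]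
  congr 1
  refine Finset.sum_congr rfl fun i hi => ?_
  rw [face_eq_delta (by have := Finset.mem_range.mp hi; omega)]

theorem b'Op_eq_sum_face (n : ℕ) (φ : Cochain C) {t : CycChain C} (ht : t.2.size = n + 2) :
    b'Op n φ t = ∑ i ∈ Finset.range (n + 1), (-1 : ℂ) ^ i * φ (face i t) := by
  rw [b'Op_apply]
  refine Finset.sum_congr rfl fun i hi => ?_
  rw [face_eq_delta (by have := Finset.mem_range.mp hi; omega)]

theorem bOp_AOp (m : ℕ) (χ : Cochain C) {t : CycChain C} (ht : t.2.size = m + 2) :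
    bOp m (AOp m χ) t = AOp (m + 1) (b'Op m χ) t := by
  have lhs : bOp m (AOp m χ) t = ∑ p ∈ Finset.range (m + 2) ×ˢ Finset.range (m + 1),
      (-1 : ℂ) ^ p.1 * ((-1) ^ (m * p.2) * χ (rot^[p.2] (face p.1 t))) := by
    rw [bOp_eq_sum_face m _ ht, Finset.sum_product]
    simp only [AOp, Finset.mul_sum]
  have rhs : AOp (m + 1) (b'Op m χ) t = ∑ p ∈ Finset.range (m + 2) ×ˢ Finset.range (m + 1),
      (-1 : ℂ) ^ ((m + 1) * p.1) * ((-1) ^ p.2 * χ (face p.2 (rot^[p.1] t))) := by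
    rw [AOp, Finset.sum_product]
    refine Finset.sum_congr rfl fun k _ => ?_
    rw [b'Op_eq_sum_face m χ (by rw [size_rot_iter, ht]), Finset.mul_sum]
  have sign : ∀ {a b c d : ℕ}, (a + b) % 2 = (c + d) % 2 → ∀ x : ℂ,
      (-1 : ℂ) ^ a * ((-1) ^ b * x) = (-1) ^ c * ((-1) ^ d * x) := fun h x => by
    rw [← mul_assoc, ← mul_assoc, ← pow_add, ← pow_add, neg_one_pow_eq_pow_mod_two, h,
      ← neg_one_pow_eq_pow_mod_two]
  rw [lhs, rhs]
  -- `rot^[l] (face i t)` is face `i + l` of `rot^[l] t` if `i + l ≤ m`, and otherwise (`b'`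
  -- omits the last face) face `i + l - (m + 1)` of `rot^[l + 1] t`
  refine Finset.sum_nbij'
    (fun p => if p.1 + p.2 ≤ m then (p.2, p.1 + p.2) else (p.2 + 1, p.1 + p.2 - m - 1))
    (fun q => if q.1 ≤ q.2 then (q.2 - q.1, q.1) else (m + 2 + q.2 - q.1, q.1 - 1))
    ?_ ?_ ?_ ?_ ?_
  all_goals
    rintro ⟨x, y⟩ hxy
    simp only [Finset.mem_product, Finset.mem_range] at hxy ⊢
  · split_ifs <;> omega
  · split_ifs <;> omega
  · split_ifs <;> simp only [Prod.mk.injEq, and_true] at * <;> omega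
  · split_ifs <;> simp only [Prod.mk.injEq, true_and] at * <;> omega
  · split_ifs with hle <;> dsimp only
    · rw [face_add_rot_iter t (by omega)]
      exact sign (by rw [add_mul]; omega) _
    · rw [face_rot_iter_of_lt t (by omega) (by omega), ht, Nat.add_sub_cancel,
        show m + 2 + (x + y - m - 1) - (y + 1) = x by omega]
      have : (m + 1) * (y + 1) = m * y + m + y + 1 := by ring
      exact sign (by omega) _

def consId (t : CycChain C) : CycChain C := ⟨t.1, cons (𝟙 t.1) t.2⟩

def snocId (t : CycChain C) : CycChain C := ⟨t.1, t.2.snoc (𝟙 t.1)⟩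

theorem consId_mk {X : C} (w : Chain C X X) :
    consId (⟨X, w⟩ : CycChain C) = ⟨X, cons (𝟙 X) w⟩ := rfl

theorem snocId_mk {X : C} (w : Chain C X X) :
    snocId (⟨X, w⟩ : CycChain C) = ⟨X, w.snoc (𝟙 X)⟩ := rfl

theorem B0Op_apply (n : ℕ) (φ : Cochain C) (t : CycChain C) :
    B0Op n φ t = φ (consId t) - (-1) ^ (n + 1) * φ (snocId t) := rfl

theorem delta_zero_consId (t : CycChain C) : delta 0 (consId t) = t := by
  obtain ⟨X, w⟩ := t
  rw [consId_mk, delta_mk, composeAt_zero_cons_id]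

theorem delta_succ_consId (i : ℕ) (t : CycChain C) :
    delta (i + 1) (consId t) = consId (delta i t) := by
  obtain ⟨X, w⟩ := t
  rw [consId_mk, delta_mk, composeAt_succ_cons, delta_mk, consId_mk]

theorem cyc_consId (t : CycChain C) (h : 2 ≤ t.2.size) : cyc (consId t) = rot t := by
  obtain ⟨X, w⟩ := t
  obtain ⟨Z, c, g, rfl⟩ := w.exists_eq_snoc h
  rw [cyc, consId_mk, ← snoc_cons, rot_snoc, rot_snoc, delta_mk, composeAt_zero_cons_cons,
    Category.id_comp]

theorem rot_snocId (t : CycChain C) : rot (snocId t) = consId t :=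
  rot_snoc t.2 (𝟙 t.1)

@[simp] theorem size_snocId (t : CycChain C) : (snocId t).2.size = t.2.size + 1 :=
  size_snoc t.2 _

theorem cyc_snocId (t : CycChain C) : cyc (snocId t) = t := by
  rw [cyc, rot_snocId, delta_zero_consId]

theorem delta_snocId (t : CycChain C) {i : ℕ} (h : i + 2 ≤ t.2.size) :
    delta i (snocId t) = snocId (delta i t) := by
  obtain ⟨X, w⟩ := t
  rw [snocId_mk, delta_mk, composeAt_snoc w _ h, delta_mk, snocId_mk]

theorem delta_snocId_of_size_eq (t : CycChain C) {k : ℕ} (h : t.2.size = k + 1) :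
    delta k (snocId t) = t := by
  obtain ⟨X, w⟩ := t
  rw [snocId_mk, delta_mk, composeAt_snoc_id w h]

theorem bOp_consId (m : ℕ) (ψ : Cochain C) {t : CycChain C} (ht : t.2.size = m + 2) :
    bOp (m + 1) ψ (consId t) =
      ψ t - ∑ i ∈ Finset.range (m + 1), (-1) ^ i * ψ (consId (delta i t))
        + (-1) ^ (m + 2) * ψ (rot t) := by
  rw [bOp_apply, Finset.sum_range_succ', cyc_consId t (by omega), delta_zero_consId]
  simp only [delta_succ_consId, pow_succ, mul_neg_one, neg_mul, Finset.sum_neg_distrib]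
  ring

theorem bOp_snocId (m : ℕ) (ψ : Cochain C) {t : CycChain C} (ht : t.2.size = m + 2) :
    bOp (m + 1) ψ (snocId t) =
      ∑ i ∈ Finset.range (m + 1), (-1) ^ i * ψ (snocId (delta i t)) := by
  rw [bOp_apply, Finset.sum_range_succ, cyc_snocId, delta_snocId_of_size_eq t ht, pow_succ]
  have : ∀ i ∈ Finset.range (m + 1), (-1 : ℂ) ^ i * ψ (delta i (snocId t)) =
      (-1) ^ i * ψ (snocId (delta i t)) := fun i hi => by
    rw [delta_snocId t (by have := Finset.mem_range.mp hi; omega)]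
  rw [Finset.sum_congr rfl this]
  ring

theorem b'Op_B0Op (m : ℕ) (ψ : Cochain C) (t : CycChain C) :
    b'Op m (B0Op m ψ) t = ∑ i ∈ Finset.range (m + 1), (-1) ^ i * ψ (consId (delta i t))
      - (-1) ^ (m + 1) * ∑ i ∈ Finset.range (m + 1), (-1) ^ i * ψ (snocId (delta i t)) := by
  rw [b'Op_apply, Finset.mul_sum, ← Finset.sum_sub_distrib]
  refine Finset.sum_congr rfl fun i _ => ?_
  rw [B0Op_apply]
  ring

theorem b'Op_B0Op_add_B0Op_bOp (m : ℕ) (ψ : Cochain C) {t : CycChain C}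
    (ht : t.2.size = m + 2) :
    b'Op m (B0Op m ψ) t + B0Op (m + 1) (bOp (m + 1) ψ) t = ψ t - lamOp (m + 1) ψ t := by
  rw [b'Op_B0Op, B0Op_apply, bOp_consId m ψ ht, bOp_snocId m ψ ht, lamOp]
  simp only [pow_succ]
  ring

theorem B0Op_bOp_eq_zero {m : ℕ} {ψ : Cochain C}
    (hψ : ∀ t : CycChain C, t.2.size = m + 3 →
      lamOp (m + 2) (bOp (m + 1) ψ) t = bOp (m + 1) ψ t)
    {t : CycChain C} (ht : t.2.size = m + 2) :
    B0Op (m + 1) (bOp (m + 1) ψ) t = 0 := by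
  have h := hψ (snocId t) (by rw [size_snocId, ht])
  rw [lamOp, rot_snocId] at h
  rw [B0Op_apply, ← h, ← mul_assoc, ← pow_add, Even.neg_one_pow ⟨m + 2, rfl⟩, one_mul,
    sub_self]

theorem neg_one_pow_mul_rot_iter_succ {n : ℕ} (χ : Cochain C) {t : CycChain C}
    (ht : t.2.size = n + 1) : (-1 : ℂ) ^ (n * (n + 1)) * χ (rot^[n + 1] t) = χ t := by
  rw [← ht, rot_iter_size, ht, Even.neg_one_pow (Nat.even_mul_succ_self n), one_mul]

theorem lamOp_AOp (n : ℕ) (χ : Cochain C) {t : CycChain C} (ht : t.2.size = n + 1) :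
    lamOp n (AOp n χ) t = AOp n χ t := by
  set f : ℕ → ℂ := fun k => (-1) ^ (n * k) * χ (rot^[k] t)
  have hperiod : f (n + 1) = f 0 := by
    simpa [f] using neg_one_pow_mul_rot_iter_succ χ ht
  have hshift : lamOp n (AOp n χ) t = ∑ k ∈ Finset.range (n + 1), f (k + 1) := by
    rw [lamOp, AOp, Finset.mul_sum]
    refine Finset.sum_congr rfl fun k _ => ?_
    simp only [f]
    rw [← mul_assoc, ← pow_add, mul_add_one, add_comm (n * k), Function.iterate_succ_apply]
  have := Finset.sum_range_succ' f (n + 1)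
  rw [Finset.sum_range_succ, hperiod] at this
  rw [hshift, AOp, add_right_cancel this]

theorem AOp_eq_zero_of_eq_sub_lamOp {n : ℕ} {φ χ : Cochain C}
    (h : ∀ s : CycChain C, s.2.size = n + 1 → φ s = χ s - lamOp n χ s)
    {t : CycChain C} (ht : t.2.size = n + 1) : AOp n φ t = 0 := by
  set f : ℕ → ℂ := fun k => (-1) ^ (n * k) * χ (rot^[k] t)
  have hperiod : f (n + 1) = f 0 := by
    simpa [f] using neg_one_pow_mul_rot_iter_succ χ ht
  have htele : AOp n φ t = ∑ k ∈ Finset.range (n + 1), (f k - f (k + 1)) := by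
    refine Finset.sum_congr rfl fun k _ => ?_
    rw [h _ (by rw [size_rot_iter, ht]), lamOp, ← Function.iterate_succ_apply' rot]
    simp only [f, mul_add_one, pow_add]
    ring
  rw [htele, Finset.sum_range_sub', hperiod, sub_self]

theorem Bpsi_is_cyclic_cocycle_general
    (n : ℕ) (hn : 1 ≤ n) (ψ : Cochain C)
    (hbψ : ∀ t : CycChain C, t.2.size = n + 2 →
      lamOp (n + 1) (bOp n ψ) t = bOp n ψ t) :
    (∀ t : CycChain C, t.2.size = n + 1 → bOp (n - 1) (BOp (n - 1) ψ) t = 0) ∧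
    (∀ t : CycChain C, t.2.size = n → lamOp (n - 1) (BOp (n - 1) ψ) t = BOp (n - 1) ψ t) := by
  obtain ⟨m, rfl⟩ := Nat.exists_eq_add_of_le' hn
  simp only [Nat.add_sub_cancel]
  refine ⟨fun t ht => ?_, fun t ht => lamOp_AOp m (B0Op m ψ) ht⟩
  rw [BOp, bOp_AOp m _ ht]
  refine AOp_eq_zero_of_eq_sub_lamOp (χ := ψ) (fun s hs => ?_) ht
  rw [← b'Op_B0Op_add_B0Op_bOp m ψ hs, B0Op_bOp_eq_zero hbψ hs, add_zero]

/-- Let `n ≥ 1` and `ψ ∈ CN^n(C)` with `bψ ∈ C^{n+1}_λ(C)`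
(i.e. `(1 - λ_{n+1})(bψ) = 0`).  Then `Bψ ∈ Z^{n-1}_λ(C)`: `b(Bψ) = 0` and
`(1 - λ_{n-1})(Bψ) = 0`. -/
theorem Bpsi_is_cyclic_cocycle [Preadditive C] [CategoryTheory.Linear ℂ C]
    (n : ℕ) (hn : 1 ≤ n) (ψ : Cochain C)
    (hbψ : ∀ t : CycChain C, t.2.size = n + 2 →
      lamOp (n + 1) (bOp n ψ) t = bOp n ψ t) :
    (∀ t : CycChain C, t.2.size = n + 1 → bOp (n - 1) (BOp (n - 1) ψ) t = 0) ∧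
    (∀ t : CycChain C, t.2.size = n → lamOp (n - 1) (BOp (n - 1) ψ) t = BOp (n - 1) ψ t) :=
  Bpsi_is_cyclic_cocycle_general n hn ψ hbψ

end CFM
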